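/- arXiv:2510.00168 — 2 statements merged into one kernel-verified Lean document; each statement's English description precedes it below -/
import Mathlib

section
/- For every n ∈ ℕ, every subspace S ⊆ 𝔽₂^{2n}, and every 2^n × 2^n complex matrix A, the Pauli projection is a contraction in operator norm: ∥Π_S(A)∥_op ≤ ∥A∥_op. -/
open scoped Kronecker Classical Matrix

namespace PauliSpec

/-- The field 𝔽₂. -/
abbrev F2 := ZMod 2

/-- The phase space 𝔽₂^{2n}, identified with pairs `(xX, xZ) ∈ 𝔽₂^n × 𝔽₂^n`. -/
abbrev PhS (n : ℕ) := (Fin n → F2) × (Fin n → F2)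

/-- Index type for `n`-qubit matrices: ℂ^{2^n} ≅ ⊗_{j=1}^n ℂ². -/
abbrev QIdx (n : ℕ) := Fin n → Fin 2

/-- The 2×2 Pauli X matrix. -/
def PauliX : Matrix (Fin 2) (Fin 2) ℂ := !![0, 1; 1, 0]

/-- The 2×2 Pauli Y matrix. -/
def PauliY : Matrix (Fin 2) (Fin 2) ℂ := !![0, -Complex.I; Complex.I, 0]

/-- The 2×2 Pauli Z matrix. -/
def PauliZ : Matrix (Fin 2) (Fin 2) ℂ := !![1, 0; 0, -1]

/-- The Weyl operator `W_x := i^{xX·xZ} ⊗_j (X^{xX_j} Z^{xZ_j})`, written entrywise: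
the `(u, v)` entry of the `n`-fold Kronecker product of matrices `M_j` is `∏_j (M_j)_{u_j v_j}`. -/
noncomputable def Weyl {n : ℕ} (x : PhS n) : Matrix (QIdx n) (QIdx n) ℂ :=
  fun u v =>
    (Complex.I ^ (∑ j, (x.1 j).val * (x.2 j).val)) *
      ∏ j, (PauliX ^ (x.1 j).val * PauliZ ^ (x.2 j).val) (u j) (v j)

/-- The symplectic product `[x,y] := ∑_j (xX_j·yZ_j + xZ_j·yX_j) ∈ 𝔽₂`. -/
def sympl {n : ℕ} (x y : PhS n) : F2 :=
  ∑ j, (x.1 j * y.2 j + x.2 j * y.1 j)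

lemma sympl_add_left {n : ℕ} (x y z : PhS n) :
    sympl (x + y) z = sympl x z + sympl y z := by
  simp only [sympl, Prod.fst_add, Prod.snd_add, Pi.add_apply, add_mul]
  rw [← Finset.sum_add_distrib]
  exact Finset.sum_congr rfl fun j _ => by ring

lemma sympl_smul_left {n : ℕ} (c : F2) (x z : PhS n) :
    sympl (c • x) z = c * sympl x z := by
  simp only [sympl, Prod.smul_fst, Prod.smul_snd, Pi.smul_apply, smul_eq_mul, Finset.mul_sum]
  exact Finset.sum_congr rfl fun j _ => by ring

/-- The symplectic complement `S^⊥ := {x : [x,y] = 0 for all y ∈ S}`. -/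
def symplComplement {n : ℕ} (S : Submodule F2 (PhS n)) : Submodule F2 (PhS n) where
  carrier := {x | ∀ y ∈ S, sympl x y = 0}
  add_mem' := by
    intro a b ha hb y hy
    rw [sympl_add_left, ha y hy, hb y hy, add_zero]
  zero_mem' := by
    intro y hy
    simp [sympl]
  smul_mem' := by
    intro c x hx y hy
    rw [sympl_smul_left, hx y hy, mul_zero]

/-- The Pauli support `supp(A) := {x : tr(W_x·A) ≠ 0}`. -/
noncomputable def pauliSupport {n : ℕ} (A : Matrix (QIdx n) (QIdx n) ℂ) : Set (PhS n) :=
  {x | (Weyl x * A).trace ≠ 0}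

/-- The Pauli projection `Π_S(A) := 2^{−n} ∑_{x∈S} tr(A·W_x)·W_x`. -/
noncomputable def pauliProj {n : ℕ} (S : Set (PhS n)) (A : Matrix (QIdx n) (QIdx n) ℂ) :
    Matrix (QIdx n) (QIdx n) ℂ :=
  (2 ^ n : ℂ)⁻¹ • ∑ᶠ x ∈ S, (A * Weyl x).trace • Weyl x

/-- The subspace `𝒲_{a,b} ⊆ 𝔽₂^{2n}`: `xX_j = 0` on the first `n−a` coordinates and
`xZ_j = 0` on the first `n−a−b` coordinates. -/
def Wab (n a b : ℕ) : Submodule F2 (PhS n) where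
  carrier := {x | (∀ j : Fin n, (j : ℕ) < n - a → x.1 j = 0) ∧
    ∀ j : Fin n, (j : ℕ) < n - a - b → x.2 j = 0}
  add_mem' := by
    rintro x y ⟨hx1, hx2⟩ ⟨hy1, hy2⟩
    refine ⟨fun j hj => ?_, fun j hj => ?_⟩
    · simp [Prod.fst_add, Pi.add_apply, hx1 j hj, hy1 j hj]
    · simp [Prod.snd_add, Pi.add_apply, hx2 j hj, hy2 j hj]
  zero_mem' := ⟨fun j _ => rfl, fun j _ => rfl⟩
  smul_mem' := by
    rintro c x ⟨hx1, hx2⟩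
    refine ⟨fun j hj => ?_, fun j hj => ?_⟩
    · simp [Prod.smul_fst, Pi.smul_apply, hx1 j hj]
    · simp [Prod.smul_snd, Pi.smul_apply, hx2 j hj]

/-- `A` is `(a,b)`-block-diagonal: under ℂ^{2^n} ≅ ℂ^{2^{n−a−b}} ⊗ ℂ^{2^b} ⊗ ℂ^{2^a},
`A = I ⊗ (∑_{y∈{0,1}^b} |y⟩⟨y| ⊗ A_y)`.  Entrywise: `A u v = 0` unless `u, v` agree on the
first `n−a` coordinates, and then the entry is `A_{u₂}(u₃, v₃)` where `u₂` is the middle `b`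
coordinates and `u₃, v₃` the last `a` coordinates. -/
def IsBlockDiag {n : ℕ} (a b : ℕ) (hab : a + b ≤ n)
    (A : Matrix (QIdx n) (QIdx n) ℂ) : Prop :=
  ∃ M : (Fin b → Fin 2) → Matrix (Fin a → Fin 2) (Fin a → Fin 2) ℂ,
    ∀ u v : QIdx n,
      A u v =
        if ∀ j : Fin n, (j : ℕ) < n - a → u j = v j then
          M (fun i => u ⟨n - a - b + i.1, by have := i.2; omega⟩)
            (fun i => u ⟨n - a + i.1, by have := i.2; omega⟩)
            (fun i => v ⟨n - a + i.1, by have := i.2; omega⟩)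
        else 0

/-- The ℓ² → ℓ² operator norm of a complex matrix. -/
noncomputable def l2OpNorm {ι κ : Type*} [Fintype ι] [Fintype κ] [DecidableEq κ]
    (A : Matrix ι κ ℂ) : ℝ :=
  ‖LinearMap.toContinuousLinearMap (Matrix.toEuclideanLin A)‖

/-- `C` is a Clifford unitary: it is unitary and conjugates every Weyl operator to a
signed Weyl operator. -/
def IsCliffordUnitary {n : ℕ} (C : Matrix (QIdx n) (QIdx n) ℂ) : Prop :=
  C ∈ Matrix.unitaryGroup (QIdx n) ℂ ∧
    ∀ x : PhS n, ∃ (y : PhS n) (s : ℂ), (s = 1 ∨ s = -1) ∧ C * Weyl x * Cᴴ = s • Weyl y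

/-- `C T C† := {y : ∃ x ∈ T, C·W_x·C† = ±W_y}`. -/
def conjSet {n : ℕ} (C : Matrix (QIdx n) (QIdx n) ℂ) (T : Set (PhS n)) : Set (PhS n) :=
  {y | ∃ x ∈ T, ∃ s : ℂ, (s = 1 ∨ s = -1) ∧ C * Weyl x * Cᴴ = s • Weyl y}

/-- The matrix acting as the 2×2 matrix `P` on qubit `i` and as the identity elsewhere:
`P_i := I^{⊗(i−1)} ⊗ P ⊗ I^{⊗(n−i)}`. -/
def onQubit {n : ℕ} (P : Matrix (Fin 2) (Fin 2) ℂ) (i : Fin n) :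
    Matrix (QIdx n) (QIdx n) ℂ :=
  fun u v => if ∀ j : Fin n, j ≠ i → u j = v j then P (u i) (v i) else 0

/-- The unitary on `2n` qubits exchanging the `i`-th qubit of the first group of `n`
qubits with the `i`-th qubit of the second group. -/
def swapQubit {n : ℕ} (i : Fin n) :
    Matrix (QIdx n × QIdx n) (QIdx n × QIdx n) ℂ :=
  fun p q =>
    if p.1 = Function.update q.1 i (q.2 i) ∧ p.2 = Function.update q.2 i (q.1 i) then 1 else 0

/-!
Conjugating by `W_z` multiplies the coefficient of `W_x` in the Weyl expansion
`A = 2^{-n} ∑_x tr(A W_x) W_x` by `(-1)^{[x,z]}`, and the character sum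
`∑_{z ∈ S^⊥} (-1)^{[x,z]}` is `|S^⊥|` for `x ∈ (S^⊥)^⊥ = S` and `0` otherwise. Hence `Π_S(A)` is
the average of the unitary conjugates `W_z A W_z` over `z ∈ S^⊥`, and the operator norm, being
unitarily invariant and subadditive, does not increase.
-/

lemma F2.eq_zero_or_one (a : F2) : a = 0 ∨ a = 1 := by decide +revert

lemma F2.univ_eq : (Finset.univ : Finset F2) = {0, 1} := rfl

def signChar : AddChar F2 ℂ where
  toFun a := (-1) ^ a.val
  map_zero_eq_one' := by simp
  map_add_eq_mul' a b := by rw [← pow_add, ZMod.val_add, ← neg_one_pow_eq_pow_mod_two]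

lemma signChar_apply (a : F2) : signChar a = (-1) ^ a.val := rfl

lemma signChar_eq_one_iff (a : F2) : signChar a = 1 ↔ a = 0 := by
  rcases F2.eq_zero_or_one a with rfl | rfl
  · simp
  · norm_num [signChar_apply, ZMod.val_one]

lemma signChar_sum {ι : Type*} (s : Finset ι) (e : ι → F2) :
    signChar (∑ i ∈ s, e i) = ∏ i ∈ s, signChar (e i) := by
  induction s using Finset.cons_induction with
  | empty => simp
  | cons i s hi ih => rw [Finset.sum_cons, Finset.prod_cons, AddChar.map_add_eq_mul, ih]

section PiKron

variable {ι κ R : Type*} [Fintype ι] [CommSemiring R]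

def piKron (M : ι → Matrix κ κ R) : Matrix (ι → κ) (ι → κ) R :=
  Matrix.of fun u v => ∏ i, M i (u i) (v i)

@[simp]
lemma piKron_apply (M : ι → Matrix κ κ R) (u v : ι → κ) :
    piKron M u v = ∏ i, M i (u i) (v i) := rfl

lemma piKron_mul [DecidableEq ι] [Fintype κ] (M N : ι → Matrix κ κ R) :
    piKron M * piKron N = piKron fun i => M i * N i := by
  ext u v
  simp only [Matrix.mul_apply, piKron_apply, ← Finset.prod_mul_distrib, Fintype.prod_sum]

lemma piKron_smul (c : ι → R) (M : ι → Matrix κ κ R) :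
    piKron (fun i => c i • M i) = (∏ i, c i) • piKron M := by
  ext u v
  simp [Finset.prod_mul_distrib]

lemma piKron_one [DecidableEq ι] [DecidableEq κ] :
    piKron (fun _ : ι => (1 : Matrix κ κ R)) = 1 := by
  ext u v
  simp only [piKron_apply, Matrix.one_apply, Finset.prod_ite_zero, Finset.prod_const_one,
    Finset.mem_univ, forall_const, funext_iff]

lemma piKron_conjTranspose [StarRing R] (M : ι → Matrix κ κ R) :
    (piKron M)ᴴ = piKron fun i => (M i)ᴴ := by
  ext u v
  simp [star_prod]

lemma sum_star_piKron_mul_piKron {β : Type*} [DecidableEq ι] [DecidableEq κ] [Fintype β]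
    [StarRing R] (B : β → Matrix κ κ R) (c : R)
    (hB : ∀ p q u v, ∑ b, star (B b p q) * B b u v = if p = u ∧ q = v then c else 0)
    (p q u v : ι → κ) :
    ∑ f : ι → β, star (piKron (fun i => B (f i)) p q) * piKron (fun i => B (f i)) u v =
      if p = u ∧ q = v then c ^ Fintype.card ι else 0 := by
  simp only [piKron_apply, star_prod, ← Finset.prod_mul_distrib]
  rw [← Fintype.prod_sum fun i b => star (B b (p i) (q i)) * B b (u i) (v i)]
  simp only [hB, Finset.prod_ite_zero, Finset.prod_const, Finset.card_univ, Finset.mem_univ,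
    forall_const, funext_iff, forall_and]

end PiKron

def pauli (a b : F2) : Matrix (Fin 2) (Fin 2) ℂ := PauliX ^ a.val * PauliZ ^ b.val

lemma pauli_zero_zero : pauli 0 0 = !![1, 0; 0, 1] := by
  simp [pauli, Matrix.one_fin_two]

lemma pauli_one_zero : pauli 1 0 = !![0, 1; 1, 0] := by
  simp [pauli, PauliX, ZMod.val_one]

lemma pauli_zero_one : pauli 0 1 = !![1, 0; 0, -1] := by
  simp [pauli, PauliZ, ZMod.val_one]

lemma pauli_one_one : pauli 1 1 = !![0, -1; 1, 0] := by
  simp [pauli, PauliX, PauliZ, ZMod.val_one]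

lemma pauli_mul_comm (a b c d : F2) :
    pauli a b * pauli c d = signChar (a * d + b * c) • (pauli c d * pauli a b) := by
  rcases F2.eq_zero_or_one a with rfl | rfl <;> rcases F2.eq_zero_or_one b with rfl | rfl <;>
    rcases F2.eq_zero_or_one c with rfl | rfl <;> rcases F2.eq_zero_or_one d with rfl | rfl <;>
    simp [pauli_zero_zero, pauli_one_zero, pauli_zero_one, pauli_one_one, signChar_apply,
      ZMod.val_one, show (1 : F2) + 1 = 0 from rfl]

lemma pauli_mul_self (a b : F2) : pauli a b * pauli a b = (-1 : ℂ) ^ (a.val * b.val) • 1 := by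
  rcases F2.eq_zero_or_one a with rfl | rfl <;> rcases F2.eq_zero_or_one b with rfl | rfl <;>
    simp [pauli_zero_zero, pauli_one_zero, pauli_zero_one, pauli_one_one, Matrix.one_fin_two,
      ZMod.val_one]

lemma pauli_conjTranspose (a b : F2) :
    (pauli a b)ᴴ = (-1 : ℂ) ^ (a.val * b.val) • pauli a b := by
  rcases F2.eq_zero_or_one a with rfl | rfl <;> rcases F2.eq_zero_or_one b with rfl | rfl <;>
    ext i j <;> fin_cases i <;> fin_cases j <;>
    simp [pauli_zero_zero, pauli_one_zero, pauli_zero_one, pauli_one_one, ZMod.val_one]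

lemma sum_star_pauli_mul_pauli (p q u v : Fin 2) :
    ∑ ab : F2 × F2, star (pauli ab.1 ab.2 p q) * pauli ab.1 ab.2 u v =
      if p = u ∧ q = v then 2 else 0 := by
  rw [Fintype.sum_prod_type, F2.univ_eq]
  fin_cases p <;> fin_cases q <;> fin_cases u <;> fin_cases v <;>
    simp [pauli_zero_zero, pauli_one_zero, pauli_zero_one, pauli_one_one, one_add_one_eq_two]

section Symplectic

variable {n : ℕ}

lemma sympl_comm (x y : PhS n) : sympl x y = sympl y x :=
  Finset.sum_congr rfl fun _ _ => by ring

lemma sympl_add_right (x y z : PhS n) : sympl x (y + z) = sympl x y + sympl x z := by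
  rw [sympl_comm, sympl_add_left, sympl_comm y, sympl_comm z]

lemma sympl_smul_right (c : F2) (x z : PhS n) : sympl x (c • z) = c * sympl x z := by
  rw [sympl_comm, sympl_smul_left, sympl_comm z]

def symplForm (n : ℕ) : LinearMap.BilinForm F2 (PhS n) :=
  LinearMap.mk₂ F2 sympl sympl_add_left sympl_smul_left sympl_add_right sympl_smul_right

@[simp]
lemma symplForm_apply (x y : PhS n) : symplForm n x y = sympl x y := rfl

lemma symplForm_isRefl : (symplForm n).IsRefl := fun x y h => by
  rwa [symplForm_apply, sympl_comm]

lemma symplForm_nondegenerate : (symplForm n).Nondegenerate := by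
  refine symplForm_isRefl.nondegenerate_iff_separatingLeft.mpr fun x hx => ?_
  have h1 (j : Fin n) : x.1 j = 0 := by
    simpa [sympl, Pi.single_apply] using hx (0, Pi.single j 1)
  have h2 (j : Fin n) : x.2 j = 0 := by
    simpa [sympl, Pi.single_apply] using hx (Pi.single j 1, 0)
  exact Prod.ext (funext h1) (funext h2)

lemma mem_symplComplement {S : Submodule F2 (PhS n)} {x : PhS n} :
    x ∈ symplComplement S ↔ ∀ y ∈ S, sympl x y = 0 := Iff.rfl

lemma symplComplement_eq_orthogonal (S : Submodule F2 (PhS n)) :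
    symplComplement S = (symplForm n).orthogonal S := by
  ext x
  simp only [mem_symplComplement, LinearMap.BilinForm.mem_orthogonal_iff,
    symplForm_apply, sympl_comm _ x]

lemma symplComplement_symplComplement (S : Submodule F2 (PhS n)) :
    symplComplement (symplComplement S) = S := by
  rw [symplComplement_eq_orthogonal, symplComplement_eq_orthogonal,
    LinearMap.BilinForm.orthogonal_orthogonal symplForm_nondegenerate symplForm_isRefl]

lemma sum_signChar_sympl_symplComplement (S : Submodule F2 (PhS n)) (x : PhS n) :
    ∑ z : symplComplement S, signChar (sympl x z) =
      if x ∈ S then (Fintype.card (symplComplement S) : ℂ) else 0 := by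
  let ψ : AddChar (symplComplement S) ℂ :=
    signChar.compAddMonoidHom ((symplForm n x).toAddMonoidHom.comp (symplComplement S).subtype)
  have hψ : ψ = 0 ↔ x ∈ S :=
    calc ψ = 0 ↔ ∀ z : symplComplement S, sympl x z = 0 := by
          simp [ψ, AddChar.eq_zero_iff, signChar_eq_one_iff]
      _ ↔ x ∈ symplComplement (symplComplement S) := by
          simp [mem_symplComplement (x := x), sympl_comm x]
      _ ↔ x ∈ S := by rw [symplComplement_symplComplement]
  simpa [ψ, hψ] using AddChar.sum_eq_ite ψ

end Symplectic

section Weyl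

variable {n : ℕ}

def xzDot (x : PhS n) : ℕ := ∑ j, (x.1 j).val * (x.2 j).val

lemma weyl_eq_smul_piKron (x : PhS n) :
    Weyl x = Complex.I ^ xzDot x • piKron fun j => pauli (x.1 j) (x.2 j) := rfl

lemma weyl_mul_comm (x y : PhS n) :
    Weyl x * Weyl y = signChar (sympl x y) • (Weyl y * Weyl x) := by
  simp only [weyl_eq_smul_piKron, smul_mul_smul_comm, piKron_mul]
  rw [funext fun j => pauli_mul_comm (x.1 j) (x.2 j) (y.1 j) (y.2 j), piKron_smul, smul_smul,
    smul_smul, sympl, signChar_sum, mul_comm, mul_comm (Complex.I ^ _)]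

lemma weyl_mul_self (x : PhS n) : Weyl x * Weyl x = 1 := by
  simp only [weyl_eq_smul_piKron, smul_mul_smul_comm, piKron_mul, pauli_mul_self, piKron_smul,
    piKron_one, smul_smul, Finset.prod_pow_eq_pow_sum, ← xzDot.eq_1]
  rw [← pow_add, ← two_mul, pow_mul, Complex.I_sq, ← pow_add, ← two_mul, pow_mul, neg_one_sq,
    one_pow, one_smul]

lemma weyl_conjTranspose (x : PhS n) : (Weyl x)ᴴ = Weyl x := by
  simp only [weyl_eq_smul_piKron, Matrix.conjTranspose_smul, piKron_conjTranspose,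
    pauli_conjTranspose, piKron_smul, Finset.prod_pow_eq_pow_sum, ← xzDot.eq_1, smul_smul,
    star_pow, Complex.star_def, Complex.conj_I, ← mul_pow, neg_mul_neg, mul_one]

lemma weyl_isHermitian (x : PhS n) : (Weyl x).IsHermitian := weyl_conjTranspose x

lemma weyl_mem_unitaryGroup (x : PhS n) : Weyl x ∈ Matrix.unitaryGroup (QIdx n) ℂ := by
  rw [Matrix.mem_unitaryGroup_iff, Matrix.star_eq_conjTranspose, weyl_conjTranspose,
    weyl_mul_self]

lemma weyl_conj_weyl (x z : PhS n) :
    Weyl z * Weyl x * Weyl z = signChar (sympl x z) • Weyl x := by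
  rw [weyl_mul_comm, smul_mul_assoc, mul_assoc, weyl_mul_self, mul_one, sympl_comm]

lemma sum_star_weyl_mul_weyl (p q u v : QIdx n) :
    ∑ x : PhS n, star (Weyl x p q) * Weyl x u v = if p = u ∧ q = v then 2 ^ n else 0 := by
  have hphase (x : PhS n) : star (Complex.I ^ xzDot x) * Complex.I ^ xzDot x = 1 := by
    rw [star_pow, Complex.star_def, Complex.conj_I, ← mul_pow, neg_mul, Complex.I_mul_I, neg_neg,
      one_pow]
  simp only [weyl_eq_smul_piKron, Matrix.smul_apply, smul_eq_mul, star_mul', mul_mul_mul_comm,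
    hphase, one_mul]
  rw [← (Equiv.arrowProdEquivProdArrow (Fin n) (fun _ => F2) (fun _ => F2)).sum_comp]
  simpa using sum_star_piKron_mul_piKron (fun ab : F2 × F2 => pauli ab.1 ab.2) 2
    sum_star_pauli_mul_pauli p q u v

lemma trace_mul_weyl (A : Matrix (QIdx n) (QIdx n) ℂ) (x : PhS n) :
    (A * Weyl x).trace = ∑ p, ∑ q, A p q * star (Weyl x p q) := by
  simp only [Matrix.trace, Matrix.diag_apply, Matrix.mul_apply, (weyl_isHermitian x).apply]

lemma sum_trace_mul_weyl_smul_weyl (A : Matrix (QIdx n) (QIdx n) ℂ) :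
    ∑ x : PhS n, (A * Weyl x).trace • Weyl x = (2 ^ n : ℂ) • A := by
  ext u v
  calc (∑ x : PhS n, (A * Weyl x).trace • Weyl x) u v
      = ∑ p, ∑ q, A p q * ∑ x : PhS n, star (Weyl x p q) * Weyl x u v := by
        simp only [Matrix.sum_apply, Matrix.smul_apply, smul_eq_mul, trace_mul_weyl,
          Finset.sum_mul, Finset.mul_sum, mul_assoc]
        rw [Finset.sum_comm]
        exact Finset.sum_congr rfl fun p _ => Finset.sum_comm
    _ = ((2 ^ n : ℂ) • A) u v := by
        simp only [sum_star_weyl_mul_weyl]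
        simp [ite_and, mul_comm]

end Weyl

section Twirl

variable {n : ℕ}

lemma two_pow_smul_weyl_mul_mul_weyl (z : PhS n) (A : Matrix (QIdx n) (QIdx n) ℂ) :
    (2 ^ n : ℂ) • (Weyl z * A * Weyl z) =
      ∑ x : PhS n, (signChar (sympl x z) * (A * Weyl x).trace) • Weyl x := by
  rw [← smul_mul_assoc, ← mul_smul_comm, ← sum_trace_mul_weyl_smul_weyl, Finset.mul_sum,
    Finset.sum_mul]
  refine Finset.sum_congr rfl fun x _ => ?_
  rw [mul_smul_comm, smul_mul_assoc, weyl_conj_weyl, smul_smul, mul_comm]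

lemma pauliProj_eq_sum (S : Set (PhS n)) (A : Matrix (QIdx n) (QIdx n) ℂ) :
    pauliProj S A = (2 ^ n : ℂ)⁻¹ •
      ∑ x : PhS n, (if x ∈ S then (A * Weyl x).trace else 0) • Weyl x := by
  simp only [pauliProj, finsum_eq_if, finsum_eq_sum_of_fintype, ite_smul, zero_smul]

lemma two_pow_smul_sum_weyl_mul_mul_weyl (S : Submodule F2 (PhS n))
    (A : Matrix (QIdx n) (QIdx n) ℂ) :
    (2 ^ n : ℂ) • ∑ z : symplComplement S, Weyl (z : PhS n) * A * Weyl z =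
      (Fintype.card (symplComplement S) : ℂ) •
        ∑ x : PhS n, (if x ∈ S then (A * Weyl x).trace else 0) • Weyl x := by
  simp only [Finset.smul_sum, two_pow_smul_weyl_mul_mul_weyl]
  rw [Finset.sum_comm]
  refine Finset.sum_congr rfl fun x _ => ?_
  rw [← Finset.sum_smul, ← Finset.sum_mul, sum_signChar_sympl_symplComplement, smul_smul]
  split_ifs <;> simp

lemma pauliProj_eq_average (S : Submodule F2 (PhS n)) (A : Matrix (QIdx n) (QIdx n) ℂ) :
    pauliProj (S : Set (PhS n)) A = (Fintype.card (symplComplement S) : ℂ)⁻¹ •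
      ∑ z : symplComplement S, Weyl (z : PhS n) * A * Weyl z := by
  have hcard : (Fintype.card (symplComplement S) : ℂ) ≠ 0 :=
    Nat.cast_ne_zero.mpr Fintype.card_ne_zero
  simp only [pauliProj_eq_sum, SetLike.mem_coe]
  rw [← inv_smul_smul₀ hcard (∑ x : PhS n, _), ← two_pow_smul_sum_weyl_mul_mul_weyl, smul_comm,
    inv_smul_smul₀ (pow_ne_zero n two_ne_zero)]

end Twirl

section Norm

open scoped Matrix.Norms.L2Operator

lemma norm_sum_unitary_mul_mul_unitary_le {E ι : Type*} [NormedRing E] [StarRing E]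
    [CStarRing E] (s : Finset ι) (U V : ι → E) (hU : ∀ i, U i ∈ unitary E)
    (hV : ∀ i, V i ∈ unitary E) (A : E) :
    ‖∑ i ∈ s, U i * A * V i‖ ≤ s.card * ‖A‖ := by
  refine (norm_sum_le _ _).trans_eq ?_
  simp [CStarRing.norm_mul_mem_unitary _ (hV _), CStarRing.norm_mem_unitary_mul _ (hU _)]

lemma norm_average_unitary_mul_mul_unitary_le {E ι : Type*} [NormedRing E] [StarRing E]
    [CStarRing E] [NormedSpace ℂ E] [Fintype ι] (U V : ι → E) (hU : ∀ i, U i ∈ unitary E)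
    (hV : ∀ i, V i ∈ unitary E) (A : E) :
    ‖(Fintype.card ι : ℂ)⁻¹ • ∑ i, U i * A * V i‖ ≤ ‖A‖ := by
  rw [norm_smul, norm_inv, Complex.norm_natCast, inv_mul_eq_div]
  exact div_le_of_le_mul₀ (Nat.cast_nonneg _) (norm_nonneg A)
    ((norm_sum_unitary_mul_mul_unitary_le _ U V hU hV A).trans_eq (mul_comm _ _))

lemma l2OpNorm_average_unitary_mul_mul_unitary_le {ι κ : Type*} [Fintype ι] [Fintype κ]
    [DecidableEq κ] (U V : ι → Matrix κ κ ℂ) (hU : ∀ i, U i ∈ Matrix.unitaryGroup κ ℂ)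
    (hV : ∀ i, V i ∈ Matrix.unitaryGroup κ ℂ) (A : Matrix κ κ ℂ) :
    l2OpNorm ((Fintype.card ι : ℂ)⁻¹ • ∑ i, U i * A * V i) ≤ l2OpNorm A :=
  norm_average_unitary_mul_mul_unitary_le U V hU hV A

end Norm

theorem stmt6 (n : ℕ) (S : Submodule F2 (PhS n)) (A : Matrix (QIdx n) (QIdx n) ℂ) :
    l2OpNorm (pauliProj (S : Set (PhS n)) A) ≤ l2OpNorm A := by
  rw [pauliProj_eq_average]
  exact l2OpNorm_average_unitary_mul_mul_unitary_le _ _ (fun _ => weyl_mem_unitaryGroup _)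
    (fun _ => weyl_mem_unitaryGroup _) A

end PauliSpec
end

section
/- Let a, b, n ∈ ℕ with a + b ≤ n and let A be a 2^n × 2^n complex matrix. Then the following are equivalent: (1) A is (a,b)-block-diagonal; (2) supp(A) ⊆ 𝒲_{a,b}; (3) Π_{𝒲_{a,b}}(A) = A. -/
open scoped Kronecker Classical Matrix

namespace PauliSpec

def toB (t : Fin 2) : F2 := (t.val : F2)
def ofB (s : F2) : Fin 2 := if s = 0 then 0 else 1

lemma ofB_toB (t : Fin 2) : ofB (toB t) = t := by revert t; decide
lemma toB_ofB (s : F2) : toB (ofB s) = s := by revert s; decide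
lemma F2_cases (s : F2) : s = 0 ∨ s = 1 := by revert s; decide
lemma toB_add_toB_eq_zero_iff (t u : Fin 2) : toB t + toB u = 0 ↔ t = u := by
  revert t u; decide

variable {n : ℕ}

def shiftv (v : QIdx n) (s : Fin n → F2) : QIdx n := fun j => ofB (toB (v j) + s j)

def dd (u v : QIdx n) : Fin n → F2 := fun j => toB (u j) + toB (v j)

lemma shiftv_apply_eq_self (v : QIdx n) (s : Fin n → F2) (j : Fin n) (h : s j = 0) :
    shiftv v s j = v j := by simp [shiftv, h, ofB_toB]

lemma shiftv_apply_ne_self (v : QIdx n) (s : Fin n → F2) (j : Fin n) (h : s j ≠ 0) :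
    shiftv v s j ≠ v j := by
  rcases F2_cases (s j) with h0 | h1
  · exact absurd h0 h
  · have : ∀ t : Fin 2, ofB (toB t + 1) ≠ t := by decide
    rw [shiftv, h1]; exact this (v j)

lemma shiftv_dd (u v : QIdx n) : shiftv v (dd u v) = u := by
  funext j
  show ofB (toB (v j) + (toB (u j) + toB (v j))) = u j
  have : toB (v j) + (toB (u j) + toB (v j)) = toB (u j) := by
    generalize toB (v j) = p; generalize toB (u j) = q; revert p q; decide
  rw [this, ofB_toB]

lemma eq_shiftv_iff (u v : QIdx n) (s : Fin n → F2) : u = shiftv v s ↔ s = dd u v := by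
  constructor
  · intro h
    funext j
    have hj : u j = ofB (toB (v j) + s j) := congrFun h j
    have := congrArg toB hj
    rw [toB_ofB] at this
    show s j = toB (u j) + toB (v j)
    rw [this]
    generalize toB (v j) = p; generalize s j = q; revert p q; decide
  · rintro rfl
    exact (shiftv_dd u v).symm

lemma dd_eq_zero_iff (u v : QIdx n) : dd u v = 0 ↔ u = v := by
  constructor
  · intro h; funext j
    exact (toB_add_toB_eq_zero_iff _ _).1 (congrFun h j)
  · rintro rfl; funext j; exact (toB_add_toB_eq_zero_iff _ _).2 rfl

noncomputable def sgn (t : F2) : ℂ := if t = 0 then 1 else -1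

lemma sgn_zero : sgn 0 = 1 := rfl

lemma sgn_add (s t : F2) : sgn (s + t) = sgn s * sgn t := by
  rcases F2_cases s with rfl | rfl <;> rcases F2_cases t with rfl | rfl <;>
    simp [sgn, show (1 + 1 : F2) = 0 from rfl]

lemma sgn_eq_pow (t : F2) : sgn t = (-1 : ℂ) ^ t.val := by
  rcases F2_cases t with rfl | rfl <;> simp [sgn, ZMod.val_one]

noncomputable def chi (s : Fin n → F2) (v : QIdx n) : ℂ := ∏ j, sgn (s j * toB (v j))

lemma prod_ite_zero {ι : Type*} [Fintype ι] (p : ι → Prop) [DecidablePred p] (f : ι → ℂ) :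
    (∏ j, if p j then f j else 0) = if ∀ j, p j then ∏ j, f j else 0 := by
  by_cases h : ∀ j, p j
  · rw [if_pos h]; exact Finset.prod_congr rfl fun j _ => if_pos (h j)
  · rw [if_neg h]
    push_neg at h
    obtain ⟨j, hj⟩ := h
    exact Finset.prod_eq_zero (Finset.mem_univ j) (if_neg hj)


lemma pauli_factor (a c : F2) (u v : Fin 2) :
    (PauliX ^ a.val * PauliZ ^ c.val) u v
      = if toB u = toB v + a then sgn (c * toB v) else 0 := by
  rcases F2_cases a with rfl | rfl <;> rcases F2_cases c with rfl | rfl <;>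
    fin_cases u <;> fin_cases v <;>
      simp [PauliX, PauliZ, ZMod.val_one, pow_succ, Matrix.mul_apply, Fin.sum_univ_two,
        toB, sgn, show (1 + 1 : F2) = 0 from rfl]

lemma toB_cond_iff {n : ℕ} (u v : QIdx n) (s : Fin n → F2) (j : Fin n) :
    toB (u j) = toB (v j) + s j ↔ u j = shiftv v s j := by
  constructor
  · intro h
    have := congrArg ofB h
    rwa [ofB_toB] at this
  · intro h
    have := congrArg toB h
    rwa [show shiftv v s j = ofB (toB (v j) + s j) from rfl, toB_ofB] at this

lemma weyl_apply {n : ℕ} (x : PhS n) (u v : QIdx n) :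
    Weyl x u v = Complex.I ^ (∑ j, (x.1 j).val * (x.2 j).val) *
      if u = shiftv v x.1 then chi x.2 v else 0 := by
  rw [Weyl]
  congr 1
  rw [Finset.prod_congr rfl fun j _ => pauli_factor (x.1 j) (x.2 j) (u j) (v j)]
  by_cases h : u = shiftv v x.1
  · rw [if_pos h, chi]
    exact Finset.prod_congr rfl fun j _ =>
      if_pos ((toB_cond_iff u v x.1 j).2 (congrFun h j))
  · rw [if_neg h]
    have : ∃ j, u j ≠ shiftv v x.1 j := by
      by_contra hc
      push_neg at hc
      exact h (funext hc)
    obtain ⟨j, hj⟩ := this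
    exact Finset.prod_eq_zero (Finset.mem_univ j)
      (if_neg fun hcond => hj ((toB_cond_iff u v x.1 j).1 hcond))

noncomputable def Tsum {n : ℕ} (A : Matrix (QIdx n) (QIdx n) ℂ) (x : PhS n) : ℂ :=
  ∑ w, chi x.2 w * A w (shiftv w x.1)

lemma trace_weyl_mul {n : ℕ} (x : PhS n) (A : Matrix (QIdx n) (QIdx n) ℂ) :
    (Weyl x * A).trace = Complex.I ^ (∑ j, (x.1 j).val * (x.2 j).val) * Tsum A x := by
  simp only [Matrix.trace, Matrix.diag, Matrix.mul_apply, weyl_apply, Tsum]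
  rw [Finset.sum_comm, Finset.mul_sum]
  refine Finset.sum_congr rfl fun w _ => ?_
  have key : ∀ u : QIdx n,
      (Complex.I ^ (∑ j, (x.1 j).val * (x.2 j).val) *
        if u = shiftv w x.1 then chi x.2 w else 0) * A w u
      = if u = shiftv w x.1 then
          Complex.I ^ (∑ j, (x.1 j).val * (x.2 j).val) * (chi x.2 w * A w u) else 0 := by
    intro u; split_ifs <;> ring
  rw [Finset.sum_congr rfl fun u _ => key u, Finset.sum_ite_eq' Finset.univ (shiftv w x.1)]
  simp


lemma sum_F2 (f : F2 → ℂ) : ∑ t : F2, f t = f 0 + f 1 := by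
  have : (Finset.univ : Finset F2) = {0, 1} := by decide
  rw [this, Finset.sum_insert (by decide), Finset.sum_singleton]

lemma sum_sgn {n : ℕ} (d : Fin n → F2) :
    ∑ z : Fin n → F2, ∏ j, sgn (z j * d j) = if d = 0 then (2:ℂ)^n else 0 := by
  have h := Finset.prod_univ_sum (fun _ : Fin n => (Finset.univ : Finset F2))
    (fun j t => sgn (t * d j))
  rw [Fintype.piFinset_univ] at h
  rw [← h]
  have hj : ∀ j : Fin n, ∑ t : F2, sgn (t * d j) = if d j = 0 then (2:ℂ) else 0 := by
    intro j
    rw [sum_F2]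
    rcases F2_cases (d j) with h0 | h1
    · rw [h0]; norm_num [sgn]
    · rw [h1]; simp [sgn, show (1:F2) ≠ 0 by decide]
  rw [Finset.prod_congr rfl fun j _ => hj j]
  by_cases hd : d = 0
  · rw [if_pos hd]
    rw [Finset.prod_congr rfl (fun j _ => if_pos (by rw [hd]; rfl))]
    simp
  · rw [if_neg hd]
    have : ∃ j, d j ≠ 0 := by
      by_contra hc
      push_neg at hc
      exact hd (funext hc)
    obtain ⟨j, hjne⟩ := this
    exact Finset.prod_eq_zero (Finset.mem_univ j) (if_neg hjne)

lemma neg_one_pow_val (t u : F2) : (-1 : ℂ) ^ (t.val * u.val) = sgn (t * u) := by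
  rcases F2_cases t with rfl | rfl <;> rcases F2_cases u with rfl | rfl <;>
    simp [sgn, ZMod.val_one, show (1 * 1 : F2) = 1 from rfl]

lemma iphase_sq {n : ℕ} (x : PhS n) :
    Complex.I ^ (∑ j, (x.1 j).val * (x.2 j).val) *
      Complex.I ^ (∑ j, (x.1 j).val * (x.2 j).val) = ∏ j, sgn (x.1 j * x.2 j) := by
  rw [← pow_add, ← two_mul, pow_mul, Complex.I_sq,
    ← Finset.prod_pow_eq_pow_sum]
  exact Finset.prod_congr rfl fun j _ => neg_one_pow_val _ _

lemma chi_mul_chi {n : ℕ} (s : Fin n → F2) (v w : QIdx n) :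
    chi s v * chi s w = ∏ j, sgn (s j * dd v w j) := by
  rw [chi, chi, ← Finset.prod_mul_distrib]
  refine Finset.prod_congr rfl fun j _ => ?_
  rw [← sgn_add, ← mul_add]
  rfl

lemma prod_sgn_mul_chi {n : ℕ} (u v : QIdx n) (z : Fin n → F2) :
    (∏ j, sgn (dd u v j * z j)) * chi z v = chi z u := by
  rw [chi, chi, ← Finset.prod_mul_distrib]
  refine Finset.prod_congr rfl fun j _ => ?_
  rw [mul_comm (dd u v j) (z j), ← sgn_add, ← mul_add]
  congr 1
  show z j * (toB (u j) + toB (v j) + toB (v j)) = z j * toB (u j)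
  congr 1
  generalize toB (u j) = p; generalize toB (v j) = q
  revert p q; decide

lemma weyl_complete {n : ℕ} (A : Matrix (QIdx n) (QIdx n) ℂ) :
    (2^n : ℂ)⁻¹ • ∑ x : PhS n, (A * Weyl x).trace • Weyl x = A := by
  ext u v
  simp only [Matrix.smul_apply, Matrix.sum_apply, smul_eq_mul]
  have hterm : ∀ x : PhS n, (A * Weyl x).trace * Weyl x u v =
      if x.1 = dd u v then chi x.2 u * Tsum A x else 0 := by
    intro x
    rw [Matrix.trace_mul_comm, trace_weyl_mul, weyl_apply]
    by_cases h : x.1 = dd u v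
    · rw [if_pos ((eq_shiftv_iff u v x.1).2 h), if_pos h]
      calc Complex.I ^ (∑ j, (x.1 j).val * (x.2 j).val) * Tsum A x *
            (Complex.I ^ (∑ j, (x.1 j).val * (x.2 j).val) * chi x.2 v)
          = (Complex.I ^ (∑ j, (x.1 j).val * (x.2 j).val) *
              Complex.I ^ (∑ j, (x.1 j).val * (x.2 j).val)) * chi x.2 v * Tsum A x := by
            ring
        _ = (∏ j, sgn (x.1 j * x.2 j)) * chi x.2 v * Tsum A x := by rw [iphase_sq]
        _ = chi x.2 u * Tsum A x := by
            rw [h, prod_sgn_mul_chi]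
    · rw [if_neg (fun hc => h ((eq_shiftv_iff u v x.1).1 hc)), if_neg h]
      ring
  rw [Finset.sum_congr rfl fun x _ => hterm x, Fintype.sum_prod_type]
  have hcol : ∀ z1 : Fin n → F2, (∑ z2 : Fin n → F2,
      if (z1, z2).1 = dd u v then chi (z1, z2).2 u * Tsum A (z1, z2) else 0)
      = if z1 = dd u v then ∑ z2 : Fin n → F2, chi z2 u * Tsum A (z1, z2) else 0 := by
    intro z1
    split_ifs <;> simp
  rw [Finset.sum_congr rfl fun z1 _ => hcol z1,
    Finset.sum_ite_eq' Finset.univ (dd u v), if_pos (Finset.mem_univ _)]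
  have hT : ∀ z2 : Fin n → F2, chi z2 u * Tsum A (dd u v, z2)
      = ∑ w, (chi z2 u * chi z2 w) * A w (shiftv w (dd u v)) := by
    intro z2
    rw [Tsum, Finset.mul_sum]
    exact Finset.sum_congr rfl fun w _ => by ring
  rw [Finset.sum_congr rfl fun z2 _ => hT z2, Finset.sum_comm]
  have hw : ∀ w : QIdx n, (∑ z2 : Fin n → F2, (chi z2 u * chi z2 w) * A w (shiftv w (dd u v)))
      = if u = w then (2:ℂ)^n * A w (shiftv w (dd u v)) else 0 := by
    intro w
    rw [← Finset.sum_mul]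
    rw [Finset.sum_congr rfl fun z2 _ => chi_mul_chi z2 u w, sum_sgn]
    by_cases h : u = w
    · rw [if_pos ((dd_eq_zero_iff u w).2 h), if_pos h]
    · rw [if_neg (fun hc => h ((dd_eq_zero_iff u w).1 hc)), if_neg h, zero_mul]
  rw [Finset.sum_congr rfl fun w _ => hw w, Finset.sum_ite_eq Finset.univ u,
    if_pos (Finset.mem_univ _)]
  have hdd : dd u v = dd v u := by
    funext j
    show toB (u j) + toB (v j) = toB (v j) + toB (u j)
    ring
  rw [hdd, shiftv_dd, ← mul_assoc, inv_mul_cancel₀ (pow_ne_zero n two_ne_zero), one_mul]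




lemma mem_Wab {n a b : ℕ} (x : PhS n) :
    x ∈ Wab n a b ↔ ((∀ j : Fin n, (j : ℕ) < n - a → x.1 j = 0) ∧
      ∀ j : Fin n, (j : ℕ) < n - a - b → x.2 j = 0) := Iff.rfl

lemma support_subset_iff {n a b : ℕ} (A : Matrix (QIdx n) (QIdx n) ℂ) :
    pauliSupport A ⊆ (Wab n a b : Set (PhS n)) ↔
      ∀ x : PhS n, x ∉ Wab n a b → Tsum A x = 0 := by
  constructor
  · intro h x hx
    by_contra hT
    refine hx (h ?_)
    show (Weyl x * A).trace ≠ 0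
    rw [trace_weyl_mul]
    exact mul_ne_zero (pow_ne_zero _ Complex.I_ne_zero) hT
  · intro h x hx
    by_contra hxW
    apply hx
    show (Weyl x * A).trace = 0
    rw [trace_weyl_mul, h x hxW, mul_zero]

def flipb (t : Fin 2) : Fin 2 := ofB (toB t + 1)

lemma flipb_ne (t : Fin 2) : flipb t ≠ t := by revert t; decide

lemma flipb_flipb (t : Fin 2) : flipb (flipb t) = t := by revert t; decide

lemma sgn_flip (t : Fin 2) : sgn (1 * toB (flipb t)) = - sgn (1 * toB t) := by
  fin_cases t <;> norm_num [flipb, ofB, toB, sgn, show ((1:ℕ) : F2) = 1 from rfl,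
    show (1 + 1 : F2) = 0 from rfl]

lemma chi_update {n : ℕ} (s : Fin n → F2) (w : QIdx n) (j0 : Fin n) (hs : s j0 = 1) :
    chi s (Function.update w j0 (flipb (w j0))) = - chi s w := by
  rw [chi, chi, ← Finset.mul_prod_erase Finset.univ _ (Finset.mem_univ j0),
    ← Finset.mul_prod_erase Finset.univ (fun j => sgn (s j * toB (w j))) (Finset.mem_univ j0)]
  have hrest : ∏ j ∈ Finset.univ.erase j0,
      sgn (s j * toB (Function.update w j0 (flipb (w j0)) j))
      = ∏ j ∈ Finset.univ.erase j0, sgn (s j * toB (w j)) :=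
    Finset.prod_congr rfl fun j hj => by
      rw [Function.update_of_ne (Finset.mem_erase.1 hj).1]
  rw [hrest, Function.update_self, hs, sgn_flip, neg_mul]

def Cone {n : ℕ} (a : ℕ) (A : Matrix (QIdx n) (QIdx n) ℂ) : Prop :=
  ∀ u v : QIdx n, (∃ j : Fin n, (j : ℕ) < n - a ∧ u j ≠ v j) → A u v = 0

def Ctwo {n : ℕ} (a b : ℕ) (A : Matrix (QIdx n) (QIdx n) ℂ) : Prop :=
  ∀ (u u' : QIdx n) (s : Fin n → F2), (∀ j : Fin n, n - a - b ≤ (j : ℕ) → u' j = u j) →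
    A u (shiftv u s) = A u' (shiftv u' s)

def emb (n a b : ℕ) (y : Fin b → Fin 2) (t : Fin a → Fin 2) : QIdx n := fun j =>
  if h1 : (j : ℕ) < n - a - b then 0
  else if h2 : (j : ℕ) < n - a then y ⟨(j : ℕ) - (n - a - b), by omega⟩
  else t ⟨(j : ℕ) - (n - a), by have := j.2; omega⟩


lemma emb_apply_ge {n a b : ℕ} (hab : a + b ≤ n) (u : QIdx n) (j : Fin n)
    (hj : n - a - b ≤ (j : ℕ)) :
    emb n a b (fun i => u ⟨n - a - b + i.1, by have := i.2; omega⟩)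
      (fun i => u ⟨n - a + i.1, by have := i.2; omega⟩) j = u j := by
  rw [emb]
  rcases lt_or_ge (j : ℕ) (n - a - b) with h1 | h1
  · omega
  rw [dif_neg (by omega)]
  rcases lt_or_ge (j : ℕ) (n - a) with h2 | h2
  · rw [dif_pos h2]
    exact congrArg u (Fin.ext (by simp; omega))
  · rw [dif_neg (by omega)]
    exact congrArg u (Fin.ext (by simp; omega))

lemma blockdiag_iff {n : ℕ} (a b : ℕ) (hab : a + b ≤ n) (A : Matrix (QIdx n) (QIdx n) ℂ) :
    IsBlockDiag a b hab A ↔ Cone a A ∧ Ctwo a b A := by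
  constructor
  · rintro ⟨M, hM⟩
    constructor
    · rintro u v ⟨j, hj, hne⟩
      rw [hM u v, if_neg (fun hall => hne (hall j hj))]
    · intro u u' s hag
      by_cases hs : ∀ j : Fin n, (j : ℕ) < n - a → s j = 0
      · have hcond : ∀ w : QIdx n, ∀ j : Fin n, (j : ℕ) < n - a → w j = shiftv w s j :=
          fun w j hj => (shiftv_apply_eq_self w s j (hs j hj)).symm
        rw [hM u (shiftv u s), hM u' (shiftv u' s), if_pos (hcond u), if_pos (hcond u')]
        have e1 : (fun i : Fin b => u ⟨n - a - b + i.1, by have := i.2; omega⟩)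
            = (fun i : Fin b => u' ⟨n - a - b + i.1, by have := i.2; omega⟩) :=
          funext fun i => (hag ⟨n - a - b + i.1, by have := i.2; omega⟩ (by simp)).symm
        have e2 : (fun i : Fin a => u ⟨n - a + i.1, by have := i.2; omega⟩)
            = (fun i : Fin a => u' ⟨n - a + i.1, by have := i.2; omega⟩) :=
          funext fun i => (hag ⟨n - a + i.1, by have := i.2; omega⟩ (by simp; omega)).symm
        have e3 : (fun i : Fin a => shiftv u s ⟨n - a + i.1, by have := i.2; omega⟩)
            = (fun i : Fin a => shiftv u' s ⟨n - a + i.1, by have := i.2; omega⟩) := by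
          funext i
          show ofB (toB (u ⟨n - a + i.1, by have := i.2; omega⟩) + _)
            = ofB (toB (u' ⟨n - a + i.1, by have := i.2; omega⟩) + _)
          rw [hag ⟨n - a + i.1, by have := i.2; omega⟩ (by simp; omega)]
        rw [e1, e2, e3]
      · push_neg at hs
        obtain ⟨j, hj, hsj⟩ := hs
        rw [hM u (shiftv u s), hM u' (shiftv u' s),
          if_neg (fun hall => shiftv_apply_ne_self u s j hsj (hall j hj).symm),
          if_neg (fun hall => shiftv_apply_ne_self u' s j hsj (hall j hj).symm)]
  · rintro ⟨h1, h2⟩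
    refine ⟨fun y t t' => A (emb n a b y t) (emb n a b y t'), fun u v => ?_⟩
    by_cases hc : ∀ j : Fin n, (j : ℕ) < n - a → u j = v j
    · rw [if_pos hc]
      have hag : ∀ j : Fin n, n - a - b ≤ (j : ℕ) →
          emb n a b (fun i => u ⟨n - a - b + i.1, by have := i.2; omega⟩)
            (fun i => u ⟨n - a + i.1, by have := i.2; omega⟩) j = u j :=
        fun j hj => emb_apply_ge hab u j hj
      have h2' := h2 u (emb n a b (fun i => u ⟨n - a - b + i.1, by have := i.2; omega⟩)
        (fun i => u ⟨n - a + i.1, by have := i.2; omega⟩)) (dd v u) hag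
      rw [shiftv_dd v u] at h2'
      rw [h2']
      congr 1
      funext j
      rcases lt_or_ge (j : ℕ) (n - a) with hjlt | hjge
      · have hsj : dd v u j = 0 := by
          show toB (v j) + toB (u j) = 0
          rw [(toB_add_toB_eq_zero_iff (v j) (u j)).2 (hc j hjlt).symm]
        rw [shiftv_apply_eq_self _ _ _ hsj, emb, emb]
        rcases lt_or_ge (j : ℕ) (n - a - b) with h1' | h1'
        · rw [dif_pos h1', dif_pos h1']
        · rw [dif_neg (by omega), dif_pos hjlt, dif_neg (by omega), dif_pos hjlt]
      · have heu : emb n a b (fun i => u ⟨n - a - b + i.1, by have := i.2; omega⟩)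
            (fun i => u ⟨n - a + i.1, by have := i.2; omega⟩) j = u j :=
          emb_apply_ge hab u j (by omega)
        have hev : emb n a b (fun i => u ⟨n - a - b + i.1, by have := i.2; omega⟩)
            (fun i => v ⟨n - a + i.1, by have := i.2; omega⟩) j
            = v ⟨n - a + ((j : ℕ) - (n - a)), by have := j.2; omega⟩ := by
          rw [emb, dif_neg (by omega), dif_neg (by omega)]
        rw [hev]
        show ofB (toB (emb n a b _ _ j) + dd v u j) = _
        rw [heu]
        have : toB (u j) + dd v u j = toB (v j) := by
          show toB (u j) + (toB (v j) + toB (u j)) = toB (v j)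
          generalize toB (u j) = p; generalize toB (v j) = q
          revert p q; decide
        rw [this, ofB_toB]
        exact (congrArg v (Fin.ext (by simp; omega))).symm
    · rw [if_neg hc]
      push_neg at hc
      obtain ⟨j, hj, hne⟩ := hc
      exact h1 u v ⟨j, hj, hne⟩




lemma support_of_blockdiag {n : ℕ} (a b : ℕ) (hab : a + b ≤ n)
    (A : Matrix (QIdx n) (QIdx n) ℂ) (h : IsBlockDiag a b hab A) :
    pauliSupport A ⊆ (Wab n a b : Set (PhS n)) := by
  obtain ⟨h1, h2⟩ := (blockdiag_iff a b hab A).1 h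
  rw [support_subset_iff]
  intro x hx
  by_cases hP : ∀ j : Fin n, (j : ℕ) < n - a → x.1 j = 0
  · have hQ : ¬ ∀ j : Fin n, (j : ℕ) < n - a - b → x.2 j = 0 :=
      fun hQ => hx ((mem_Wab x).2 ⟨hP, hQ⟩)
    push_neg at hQ
    obtain ⟨j0, hj0, hne⟩ := hQ
    have hs1 : x.2 j0 = 1 := (F2_cases _).resolve_left hne
    rw [Tsum]
    refine Finset.sum_ninvolution (fun w => Function.update w j0 (flipb (w j0)))
      ?_ ?_ (fun w => Finset.mem_univ _) ?_
    · intro w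
      have hA : A w (shiftv w x.1)
          = A (Function.update w j0 (flipb (w j0)))
              (shiftv (Function.update w j0 (flipb (w j0))) x.1) :=
        h2 w (Function.update w j0 (flipb (w j0))) x.1 (fun j hj =>
          Function.update_of_ne (fun he => by rw [he] at hj; omega) _ _)
      rw [chi_update _ _ _ hs1, ← hA]
      ring
    · intro w _
      intro he
      have := congrFun he j0
      simp only [Function.update_self] at this
      exact flipb_ne (w j0) this
    · intro w
      simp only [Function.update_self, Function.update_idem, flipb_flipb,
        Function.update_eq_self]
  · push_neg at hP
    obtain ⟨j, hj, hne⟩ := hP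
    rw [Tsum]
    refine Finset.sum_eq_zero fun w _ => ?_
    rw [h1 w (shiftv w x.1) ⟨j, hj, (shiftv_apply_ne_self w x.1 j hne).symm⟩, mul_zero]

lemma proj_eq_of_support {n a b : ℕ} (A : Matrix (QIdx n) (QIdx n) ℂ)
    (h : pauliSupport A ⊆ (Wab n a b : Set (PhS n))) :
    pauliProj (Wab n a b : Set (PhS n)) A = A := by
  have hT := (support_subset_iff (a := a) (b := b) A).1 h
  rw [pauliProj, ← Set.coe_toFinset ((Wab n a b : Set (PhS n))), finsum_mem_coe_finset]
  rw [Finset.sum_subset (Finset.subset_univ _) (fun x _ hx => ?_)]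
  · exact weyl_complete A
  · have hxW : x ∉ Wab n a b := fun hm => hx (Set.mem_toFinset.2 hm)
    rw [Matrix.trace_mul_comm, trace_weyl_mul, hT x hxW, mul_zero, zero_smul]

lemma blockdiag_of_proj {n : ℕ} (a b : ℕ) (hab : a + b ≤ n)
    (A : Matrix (QIdx n) (QIdx n) ℂ) (h : pauliProj (Wab n a b : Set (PhS n)) A = A) :
    IsBlockDiag a b hab A := by
  rw [blockdiag_iff a b hab]
  have hentry : ∀ u v : QIdx n, A u v = (2 ^ n : ℂ)⁻¹ *
      ∑ x ∈ ((Wab n a b : Set (PhS n)).toFinset),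
        (A * Weyl x).trace * Weyl x u v := by
    intro u v
    conv_lhs => rw [← h]
    rw [pauliProj, ← Set.coe_toFinset ((Wab n a b : Set (PhS n))), finsum_mem_coe_finset]
    simp [Matrix.smul_apply, Matrix.sum_apply, smul_eq_mul]
  constructor
  · rintro u v ⟨j, hj, hne⟩
    rw [hentry u v, Finset.sum_eq_zero, mul_zero]
    intro x hx
    have hxW : x ∈ Wab n a b := Set.mem_toFinset.1 hx
    obtain ⟨hx1, _⟩ := (mem_Wab x).1 hxW
    rw [weyl_apply, if_neg, mul_zero, mul_zero]
    intro he
    apply hne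
    rw [congrFun he j, shiftv_apply_eq_self v x.1 j (hx1 j hj)]
  · intro u u' s hag
    rw [hentry u (shiftv u s), hentry u' (shiftv u' s)]
    congr 1
    refine Finset.sum_congr rfl fun x hx => ?_
    have hxW : x ∈ Wab n a b := Set.mem_toFinset.1 hx
    obtain ⟨hx1, hx2⟩ := (mem_Wab x).1 hxW
    congr 1
    rw [weyl_apply, weyl_apply]
    have hcond : ∀ w : QIdx n, (w = shiftv (shiftv w s) x.1) ↔ x.1 = s := by
      intro w
      rw [eq_shiftv_iff]
      constructor
      · intro he
        funext j
        have hj := congrFun he j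
        rw [show dd w (shiftv w s) j = toB (w j) + toB (ofB (toB (w j) + s j)) from rfl,
          toB_ofB] at hj
        rw [hj]
        generalize toB (w j) = p; generalize s j = q
        revert p q; decide
      · rintro rfl
        funext j
        show x.1 j = toB (w j) + toB (ofB (toB (w j) + x.1 j))
        rw [toB_ofB]
        generalize toB (w j) = p; generalize x.1 j = q
        revert p q; decide
    by_cases hxs : x.1 = s
    · rw [if_pos ((hcond u).2 hxs), if_pos ((hcond u').2 hxs)]
      congr 1
      rw [chi, chi]
      refine Finset.prod_congr rfl fun j _ => ?_
      rcases lt_or_ge (j : ℕ) (n - a - b) with hj | hj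
      · rw [hx2 j hj, zero_mul, zero_mul]
      · have : shiftv u s j = shiftv u' s j := by
          show ofB (toB (u j) + s j) = ofB (toB (u' j) + s j)
          rw [hag j hj]
        rw [this]
    · rw [if_neg (fun hc => hxs ((hcond u).1 hc)),
        if_neg (fun hc => hxs ((hcond u').1 hc))]


theorem stmt7 (a b n : ℕ) (hab : a + b ≤ n) (A : Matrix (QIdx n) (QIdx n) ℂ) :
    (IsBlockDiag a b hab A ↔ pauliSupport A ⊆ (Wab n a b : Set (PhS n))) ∧
    (pauliSupport A ⊆ (Wab n a b : Set (PhS n)) ↔ pauliProj (Wab n a b : Set (PhS n)) A = A) := by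
  have h12 := support_of_blockdiag a b hab A
  have h23 := proj_eq_of_support (a := a) (b := b) A
  have h31 := blockdiag_of_proj a b hab A
  exact ⟨⟨h12, fun h => h31 (h23 h)⟩, h23, fun h => h12 (h31 h)⟩

end PauliSpec
end
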